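/- arXiv:1808.08747 — 2 statements merged into one kernel-verified Lean document; each statement's English description precedes it below -/
import Mathlib

section
/- Let C be an Hadamard full propelinear code of length n. Then the all-one vector u lies in the kernel K(C), and the map φ : (C,*) → Sym(n) given by φ(x) = π_x is a group homomorphism whose kernel is {e, u}; consequently the associated group Π = {π_x : x ∈ C} is isomorphic to the quotient group C/⟨u⟩. -/
/-! A nonidentity `π_x` is fixed-point free, and the length is positive because `C` has `2n`
elements, so `π_x = id` only for `x ∈ {e, u}`: the kernel of `x ↦ π_x` is `⟨u⟩ = {e, u}` and
`Π ≅ C/⟨u⟩` is the first isomorphism theorem. That `u ∈ K(C)` is just closure of `C` under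
`x ↦ x + u`, since translation by `u` is an involution. -/

open Finset

abbrev Vec (n : ℕ) := Fin n → ZMod 2

def allOne (n : ℕ) : Vec n := fun _ => 1

def permAct {n : ℕ} (σ : Equiv.Perm (Fin n)) (x : Vec n) : Vec n := fun i => x (σ⁻¹ i)

/-- An Hadamard full propelinear code of length `n`:
an Hadamard code together with a full propelinear structure. -/
structure HFPCode (n : ℕ) where
  C : Set (Vec n)
  π : Vec n → Equiv.Perm (Fin n)
  zero_mem : (0 : Vec n) ∈ C
  card_eq : C.ncard = 2 * n
  allOne_mem : allOne n ∈ C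
  add_allOne_mem : ∀ x ∈ C, x + allOne n ∈ C
  dist_eq : ∀ x ∈ C, ∀ y ∈ C, x ≠ y → y ≠ x + allOne n → 2 * hammingDist x y = n
  mul_mem : ∀ x ∈ C, ∀ y ∈ C, x + permAct (π x) y ∈ C
  π_mul : ∀ x ∈ C, ∀ y ∈ C, π (x + permAct (π x) y) = π x * π y
  π_zero : π 0 = 1
  π_allOne : π (allOne n) = 1
  π_fixedfree : ∀ x ∈ C, x ≠ 0 → x ≠ allOne n → ∀ i, π x i ≠ i

namespace HFPCode

variable {n : ℕ} (H : HFPCode n)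

/-- The propelinear group operation `x * y = x + π_x(y)`. -/
def mul (x y : Vec n) : Vec n := x + permAct (H.π x) y

/-- `*`-powers: `x^0 = e`, `x^(i+1) = x * x^i`. -/
def pow (x : Vec n) : ℕ → Vec n
  | 0 => 0
  | i + 1 => H.mul x (pow x i)

end HFPCode

/-- The kernel `K(C) = {z : z + C = C}`. -/
def kerSet {n : ℕ} (C : Set (Vec n)) : Set (Vec n) := {z | (fun x => z + x) '' C = C}

/-- Dimension of the kernel of a code. -/
noncomputable def kerDim {n : ℕ} (C : Set (Vec n)) : ℕ :=
  Module.finrank (ZMod 2) (Submodule.span (ZMod 2) (kerSet C))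

/-- The rank of a code: dimension of its linear span. -/
noncomputable def rankOf {n : ℕ} (C : Set (Vec n)) : ℕ :=
  Module.finrank (ZMod 2) (Submodule.span (ZMod 2) C)

namespace HFPCode

variable {n : ℕ} (H : HFPCode n)

lemma permAct_mul (σ τ : Equiv.Perm (Fin n)) (x : Vec n) :
    permAct (σ * τ) x = permAct σ (permAct τ x) := by
  funext i
  simp [permAct, mul_inv_rev, Equiv.Perm.mul_apply]

lemma permAct_one (x : Vec n) : permAct (1 : Equiv.Perm (Fin n)) x = x := rfl

lemma permAct_add (σ : Equiv.Perm (Fin n)) (x y : Vec n) :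
    permAct σ (x + y) = permAct σ x + permAct σ y := rfl

lemma permAct_zero (σ : Equiv.Perm (Fin n)) : permAct σ (0 : Vec n) = 0 := rfl

lemma permAct_inj (σ : Equiv.Perm (Fin n)) {x y : Vec n}
    (h : permAct σ x = permAct σ y) : x = y := by
  funext i
  have := congrFun h (σ i)
  simpa [permAct] using this

lemma add_self (x : Vec n) : x + x = 0 := by
  funext i
  have : ∀ a : ZMod 2, a + a = 0 := by decide
  exact this (x i)

/-- The code `C` as a type, to be endowed with the group structure `(C, *)`. -/
def grp : Type := {x : Vec n // x ∈ H.C}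

lemma mul_assoc' {x y z : Vec n} (hx : x ∈ H.C) (hy : y ∈ H.C) :
    H.mul (H.mul x y) z = H.mul x (H.mul y z) := by
  unfold HFPCode.mul
  rw [H.π_mul x hx y hy, permAct_mul, permAct_add, add_assoc]

lemma inv_mem {x : Vec n} (hx : x ∈ H.C) : permAct (H.π x)⁻¹ x ∈ H.C := by
  have hmaps : Set.MapsTo (H.mul x) H.C H.C := fun y hy => H.mul_mem x hx y hy
  have hinj : Set.InjOn (H.mul x) H.C := by
    intro y hy z hz h
    have h2 : permAct (H.π x) y = permAct (H.π x) z := by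
      have := add_left_cancel (a := x) h
      simpa [HFPCode.mul] using this
    exact permAct_inj _ h2
  have hbij : Set.BijOn (H.mul x) H.C H.C :=
    (Set.Finite.injOn_iff_bijOn_of_mapsTo (Set.toFinite H.C) hmaps).mp hinj
  obtain ⟨y, hy, hxy⟩ := hbij.surjOn H.zero_mem
  have h3 : permAct (H.π x) y = x := by
    have h4 : x + permAct (H.π x) y = 0 := hxy
    have := congrArg (fun w => x + w) h4
    simpa [← add_assoc, add_self] using this
  have : y = permAct (H.π x)⁻¹ x := by
    apply permAct_inj (H.π x)
    rw [h3, ← permAct_mul, mul_inv_cancel, permAct_one]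
  rwa [← this]

lemma mul_inv_self {x : Vec n} : H.mul x (permAct (H.π x)⁻¹ x) = 0 := by
  unfold HFPCode.mul
  rw [← permAct_mul, mul_inv_cancel, permAct_one, add_self]

lemma π_inv {x : Vec n} (hx : x ∈ H.C) : H.π (permAct (H.π x)⁻¹ x) = (H.π x)⁻¹ := by
  have h := H.π_mul x hx _ (H.inv_mem hx)
  have h2 : x + permAct (H.π x) (permAct (H.π x)⁻¹ x) = 0 := H.mul_inv_self
  rw [h2, H.π_zero] at h
  exact eq_inv_of_mul_eq_one_right h.symm

instance : Group H.grp where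
  mul x y := ⟨H.mul x.1 y.1, H.mul_mem x.1 x.2 y.1 y.2⟩
  one := ⟨0, H.zero_mem⟩
  inv x := ⟨permAct (H.π x.1)⁻¹ x.1, H.inv_mem x.2⟩
  mul_assoc x y z := Subtype.ext (H.mul_assoc' x.2 y.2)
  one_mul x := Subtype.ext (show H.mul 0 x.1 = x.1 by simp [HFPCode.mul, H.π_zero, permAct_one])
  mul_one x := Subtype.ext (show H.mul x.1 0 = x.1 by simp [HFPCode.mul, permAct_zero])
  inv_mul_cancel x := Subtype.ext (by
    show H.mul (permAct (H.π x.1)⁻¹ x.1) x.1 = 0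
    unfold HFPCode.mul
    rw [H.π_inv x.2, add_self])

/-- The all-one vector as an element of the group `(C,*)`. -/
def uElem : H.grp := ⟨allOne n, H.allOne_mem⟩

/-- The homomorphism `x ↦ π_x` from `(C,*)` to the symmetric group. -/
def toPerm : H.grp →* Equiv.Perm (Fin n) where
  toFun x := H.π x.1
  map_one' := H.π_zero
  map_mul' x y := H.π_mul x.1 x.2 y.1 y.2

/-- The associated group `Π = {π_x : x ∈ C}`. -/
def assocGroup : Subgroup (Equiv.Perm (Fin n)) := H.toPerm.range

lemma uElem_central (x : H.grp) : x * H.uElem = H.uElem * x := by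
  apply Subtype.ext
  show H.mul x.1 (allOne n) = H.mul (allOne n) x.1
  unfold HFPCode.mul
  rw [H.π_allOne, permAct_one]
  have : permAct (H.π x.1) (allOne n) = allOne n := rfl
  rw [this, add_comm]

instance : (Subgroup.zpowers H.uElem).Normal := by
  constructor
  intro g hg h
  obtain ⟨k, hk⟩ := hg
  have hcentral : ∀ x : H.grp, x * g = g * x := by
    intro x
    have hu : H.uElem ∈ Subgroup.center H.grp := by
      rw [Subgroup.mem_center_iff]
      intro y
      exact H.uElem_central y
    have hgc : g ∈ Subgroup.center H.grp := by
      rw [← hk]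
      exact Subgroup.zpow_mem _ hu k
    exact ((Subgroup.mem_center_iff.mp hgc) x)
  have : h * g * h⁻¹ = g := by
    rw [hcentral h, mul_assoc, mul_inv_cancel, mul_one]
  rw [this]
  exact ⟨k, hk⟩

end HFPCode

lemma mem_kerSet_of_forall_add_mem {n : ℕ} {C : Set (Vec n)} {z : Vec n}
    (h : ∀ x ∈ C, z + x ∈ C) : z ∈ kerSet C := by
  refine Set.Subset.antisymm (Set.image_subset_iff.mpr h) fun x hx => ⟨z + x, h x hx, ?_⟩
  show z + (z + x) = x
  rw [← add_assoc, HFPCode.add_self, zero_add]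

namespace HFPCode

lemma length_pos {n : ℕ} (H : HFPCode n) : 0 < n := by
  have hcard := (Set.ncard_pos (Set.toFinite H.C)).mpr ⟨0, H.zero_mem⟩
  rw [H.card_eq] at hcard
  omega

variable {n : ℕ} (H : HFPCode n)

lemma allOne_mem_kerSet : allOne n ∈ kerSet H.C :=
  mem_kerSet_of_forall_add_mem fun x hx => add_comm x (allOne n) ▸ H.add_allOne_mem x hx

lemma π_eq_one_iff {x : Vec n} (hx : x ∈ H.C) : H.π x = 1 ↔ x = 0 ∨ x = allOne n := by
  refine ⟨fun h => ?_, ?_⟩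
  · by_contra! hne
    exact H.π_fixedfree x hx hne.1 hne.2 ⟨0, H.length_pos⟩ (by rw [h]; rfl)
  · rintro (rfl | rfl)
    exacts [H.π_zero, H.π_allOne]

lemma ker_toPerm : H.toPerm.ker = Subgroup.zpowers H.uElem := by
  refine le_antisymm (fun x hx => ?_) (Subgroup.zpowers_le.mpr H.π_allOne)
  rcases (H.π_eq_one_iff x.2).mp hx with h | h
  · exact (Subtype.ext h : x = 1) ▸ one_mem _
  · exact (Subtype.ext h : x = H.uElem) ▸ Subgroup.mem_zpowers _

end HFPCode

/-- For an HFP code `C` of length `n`: the all-one vector `u` lies in the kernel `K(C)`,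
the map `x ↦ π_x` is a group homomorphism `(C,*) → Sym(n)` whose kernel is
`⟨u⟩ = {e, u}`, and consequently the associated group `Π` is isomorphic to `C/⟨u⟩`. -/
theorem allOne_mem_kerSet_and_assocGroup_iso (n : ℕ) (H : HFPCode n) :
    allOne n ∈ kerSet H.C ∧
    (∀ x ∈ H.C, ∀ y ∈ H.C, H.π (H.mul x y) = H.π x * H.π y) ∧
    (∀ x ∈ H.C, (H.π x = 1 ↔ x = 0 ∨ x = allOne n)) ∧
    H.toPerm.ker = Subgroup.zpowers H.uElem ∧
    Nonempty ((H.grp ⧸ Subgroup.zpowers H.uElem) ≃* H.assocGroup) :=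
  ⟨H.allOne_mem_kerSet, H.π_mul, fun _ hx => H.π_eq_one_iff hx, H.ker_toPerm,
    ⟨(QuotientGroup.quotientMulEquivOfEq H.ker_toPerm.symm).trans
      (QuotientGroup.quotientKerEquivRange H.toPerm)⟩⟩
end

section
/- Let C be a nonlinear HFP(4t_u,2)-code of length 4t where t is a power of two. Then the rank of C (the dimension of the F_2-linear span of C) equals 2t. -/
open Finset

namespace HFPCode

/-- `C` is an `HFP(4t_u,2)`-code with generators `a`, `b`: `(C,*)` is an abelian group
of order `8t` generated by `a` of order `4t` with `a^{2t} = u` and `b` of order `2`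
with `b ∉ ⟨a⟩`, so `(C,*) ≅ C_{4t} × C_2`. -/
def Is4tu2 (t : ℕ) (H : HFPCode (4 * t)) (a b : Vec (4 * t)) : Prop :=
  a ∈ H.C ∧ b ∈ H.C ∧
  (∀ x ∈ H.C, ∀ y ∈ H.C, H.mul x y = H.mul y x) ∧
  H.pow a (4 * t) = 0 ∧ (∀ j : ℕ, 0 < j → j < 4 * t → H.pow a j ≠ 0) ∧
  H.pow a (2 * t) = allOne (4 * t) ∧
  H.pow b 2 = 0 ∧ b ≠ 0 ∧
  (∀ i : ℕ, b ≠ H.pow a i) ∧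
  (∀ x ∈ H.C, ∃ i j : ℕ, x = H.mul (H.pow a i) (H.pow b j))

/-- `C` is an `HFP(2t,2,2_u)`-code with generators `a`, `b` (and `u`): `(C,*)` is an
abelian group of order `8t` which is the internal direct product `⟨a⟩ × ⟨b⟩ × ⟨u⟩`
with `a` of order `2t` and `b` of order `2`, so `(C,*) ≅ C_{2t} × C_2 × C_2`. -/
def Is2t22u (t : ℕ) (H : HFPCode (4 * t)) (a b : Vec (4 * t)) : Prop :=
  a ∈ H.C ∧ b ∈ H.C ∧
  (∀ x ∈ H.C, ∀ y ∈ H.C, H.mul x y = H.mul y x) ∧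
  H.pow a (2 * t) = 0 ∧ (∀ j : ℕ, 0 < j → j < 2 * t → H.pow a j ≠ 0) ∧
  H.pow b 2 = 0 ∧ b ≠ 0 ∧ allOne (4 * t) ≠ 0 ∧
  (∀ i j k : ℕ, i < 2 * t → j < 2 → k < 2 →
    H.mul (H.mul (H.pow a i) (H.pow b j)) (H.pow (allOne (4 * t)) k) = 0 →
      i = 0 ∧ j = 0 ∧ k = 0) ∧
  (∀ x ∈ H.C, ∃ i j k : ℕ,
    x = H.mul (H.mul (H.pow a i) (H.pow b j)) (H.pow (allOne (4 * t)) k))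

/-- `C` is an `HFP(2t,4_u)`-code with generators `a`, `b`: `(C,*)` is an abelian group
of order `8t` which is the internal direct product `⟨a⟩ × ⟨b⟩` with `a` of order `2t`,
`b` of order `4` and `b² = u`, so `(C,*) ≅ C_{2t} × C_4`. -/
def Is2t4u (t : ℕ) (H : HFPCode (4 * t)) (a b : Vec (4 * t)) : Prop :=
  a ∈ H.C ∧ b ∈ H.C ∧
  (∀ x ∈ H.C, ∀ y ∈ H.C, H.mul x y = H.mul y x) ∧
  H.pow a (2 * t) = 0 ∧ (∀ j : ℕ, 0 < j → j < 2 * t → H.pow a j ≠ 0) ∧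
  H.pow b 4 = 0 ∧ (∀ j : ℕ, 0 < j → j < 4 → H.pow b j ≠ 0) ∧
  H.pow b 2 = allOne (4 * t) ∧
  (∀ i j : ℕ, i < 2 * t → j < 4 → H.mul (H.pow a i) (H.pow b j) = 0 → i = 0 ∧ j = 0) ∧
  (∀ x ∈ H.C, ∃ i j : ℕ, x = H.mul (H.pow a i) (H.pow b j))

/-- The permutation associated to `a` is normalized to
`(1,2,…,2t)(2t+1,…,4t)` (0-indexed here). -/
def NormPiA (t : ℕ) (H : HFPCode (4 * t)) (a : Vec (4 * t)) : Prop :=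
  ∀ i : Fin (4 * t), ((H.π a) i).val =
    if i.val < 2 * t then (i.val + 1) % (2 * t) else 2 * t + (i.val + 1) % (2 * t)

/-- The permutation associated to `b` is normalized to
`(1,2t+1)(2,2t+2)⋯(2t,4t)` (0-indexed here). -/
def NormPiB (t : ℕ) (H : HFPCode (4 * t)) (b : Vec (4 * t)) : Prop :=
  ∀ i : Fin (4 * t), ((H.π b) i).val = (i.val + 2 * t) % (4 * t)

end HFPCode

/-- The vector `(e_{2t}, u_{2t})`: `0` on the first half, `1` on the second half. -/
def euVec (t : ℕ) : Vec (4 * t) := fun i => if i.val < 2 * t then 0 else 1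

/-- The vector `ω_{4t} = (1,0,1,0,…,1,0)`. -/
def omegaVec (t : ℕ) : Vec (4 * t) := fun i => if i.val % 2 = 0 then 1 else 0

/-- The vector `(ω_{2t}, ω_{2t} + u_{2t})`. -/
def omegaCompVec (t : ℕ) : Vec (4 * t) := fun i =>
  if i.val < 2 * t then (if i.val % 2 = 0 then 1 else 0)
  else (if i.val % 2 = 0 then 0 else 1)

/-- `C` is linear if it is an `F₂`-subspace, i.e. coincides with its linear span. -/
def IsLinearCode {n : ℕ} (C : Set (Vec n)) : Prop :=
  C = (Submodule.span (ZMod 2) C : Set (Vec n))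

/-!
Codewords other than `e` and `u` have weight `2t`, and two of them that are neither equal nor
complementary share `t` ones. Let `P` be the coordinate permutation `π_a`. Since `a * y = a + P y`,
the span of `C` is `P`-invariant and `a^k = ∑_{j<k} P^j a`. For `2t = 2^m` the identity
`(X + 1)^(2t-1) = 1 + X + ⋯ + X^(2t-1)` over `F₂` turns `a^{2t} = u` into `(P + 1)^(2t-1) a = u`,
while `(P + 1) u = 0`; so `a, (P + 1) a, …, (P + 1)^(2t-1) a` is a nilpotent chain of `2t`
independent vectors in the span, and `rank C ≥ 2t`.

Conversely, for `t` even any two codewords are orthogonal, so the span is self-orthogonal and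
`rank C ≤ 2t`. For `t = 1` every codeword has even weight, so `rank C ≤ 3` and the eight
codewords would fill their span, making `C` linear.
-/

open Module Polynomial

section LinearAlgebra

variable {K V : Type*} [Field K] [AddCommGroup V] [Module K V]

theorem linearIndependent_pow_apply_of_pow_succ_apply_eq_zero (f : Module.End K V) {m : ℕ}
    {x : V} (hm : (f ^ m) x ≠ 0) (hm' : (f ^ (m + 1)) x = 0) :
    LinearIndependent K (fun k : Fin (m + 1) => (f ^ (k : ℕ)) x) := by
  induction m generalizing x with
  | zero => simpa [linearIndependent_unique_iff] using hm
  | succ m ih =>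
    have htail := ih (x := f x) (by rwa [← Module.End.mul_apply, ← pow_succ])
      (by rwa [← Module.End.mul_apply, ← pow_succ])
    have hcons : (fun k : Fin (m + 2) => (f ^ (k : ℕ)) x)
        = Fin.cons x (fun k : Fin (m + 1) => (f ^ (k : ℕ)) (f x)) := by
      ext k : 1
      refine Fin.cases (by simp) (fun k => ?_) k
      simp [pow_succ]
    rw [hcons, linearIndependent_finCons]
    refine ⟨htail, fun hx => hm ?_⟩
    have hker : Submodule.span K (Set.range fun k : Fin (m + 1) => (f ^ (k : ℕ)) (f x))
        ≤ LinearMap.ker (f ^ (m + 1)) := by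
      rw [Submodule.span_le]
      rintro _ ⟨k, rfl⟩
      rw [SetLike.mem_coe, LinearMap.mem_ker, ← Module.End.mul_apply, ← Module.End.mul_apply,
        ← pow_add, ← pow_succ, show m + 1 + k + 1 = k + (m + 1 + 1) by omega, pow_add,
        Module.End.mul_apply, hm', map_zero]
    exact hker hx

theorem finrank_span_add_finrank_span_le {n : ℕ} {S T : Set (Fin n → K)}
    (h : ∀ x ∈ S, ∀ y ∈ T, x ⬝ᵥ y = 0) :
    finrank K (Submodule.span K S) + finrank K (Submodule.span K T) ≤ n := by
  set e := (dotProductEquiv K (Fin n)).toLinearMap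
  have hle : (Submodule.span K T).map e ≤ (Submodule.span K S).dualAnnihilator := by
    rw [Submodule.map_span_le]
    intro y hy
    rw [Submodule.mem_dualAnnihilator]
    intro w hw
    refine (Submodule.span_le (p := LinearMap.ker (e y))).mpr (fun x hx => ?_) hw
    simp [e, dotProduct_comm y, h x hx y hy]
  calc finrank K (Submodule.span K S) + finrank K (Submodule.span K T)
      = finrank K (Submodule.span K S) + finrank K ((Submodule.span K T).map e) := by
        rw [LinearEquiv.finrank_map_eq (dotProductEquiv K (Fin n))]
    _ ≤ finrank K (Submodule.span K S) + finrank K (Submodule.span K S).dualAnnihilator := by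
        gcongr; exact Submodule.finrank_mono hle
    _ = n := by rw [Subspace.finrank_add_finrank_dualAnnihilator_eq, finrank_fin_fun]

end LinearAlgebra

theorem add_one_pow_two_pow_sub_one {R : Type*} [CommSemiring R] [CharP R 2] (x : R) (m : ℕ) :
    (x + 1) ^ (2 ^ m - 1) = ∑ k ∈ range (2 ^ m), x ^ k := by
  induction m with
  | zero => simp
  | succ m ih =>
    rw [show 2 ^ (m + 1) - 1 = 2 ^ m + (2 ^ m - 1) by have := Nat.one_le_two_pow (n := m); omega,
      pow_add, add_pow_char_pow, one_pow, ih, add_mul, one_mul, mul_sum, pow_succ, mul_two,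
      sum_range_add, add_comm]
    simp_rw [pow_add]

section Weights

variable {n : ℕ}

theorem sum_eq_hammingNorm (x : Vec n) : ∑ i, x i = (hammingNorm x : ZMod 2) := by
  have key : ∀ c : ZMod 2, c = if c ≠ 0 then 1 else 0 := by decide
  rw [hammingNorm, natCast_card_filter]
  exact sum_congr rfl fun i _ => key (x i)

theorem dotProduct_eq_hammingNorm_mul (x y : Vec n) : x ⬝ᵥ y = (hammingNorm (x * y) : ZMod 2) :=
  sum_eq_hammingNorm (x * y)

theorem hammingDist_add_two_mul_hammingNorm_mul (x y : Vec n) :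
    hammingDist x y + 2 * hammingNorm (x * y) = hammingNorm x + hammingNorm y := by
  simp only [hammingDist, hammingNorm, card_filter, mul_sum, ← sum_add_distrib,
    Pi.mul_apply]
  have key : ∀ c d : ZMod 2, ((if c ≠ d then 1 else 0) + 2 * if c * d ≠ 0 then 1 else 0) =
      (if c ≠ 0 then 1 else 0) + if d ≠ 0 then 1 else 0 := by decide
  exact sum_congr rfl fun i _ => key (x i) (y i)

theorem hammingNorm_allOne : hammingNorm (allOne n) = n := by
  simp [hammingNorm, allOne]

end Weights

theorem ncard_lt_two_pow_rankOf {n : ℕ} {C : Set (Vec n)} (hC : ¬ IsLinearCode C) :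
    C.ncard < 2 ^ rankOf C := by
  by_contra! hle
  refine hC (Set.eq_of_subset_of_ncard_le Submodule.subset_span ?_)
  rwa [← Nat.card_coe_set_eq, SetLike.coe_sort_coe, Module.natCard_eq_pow_finrank (K := ZMod 2),
    Nat.card_zmod]

theorem allOne_ne_zero {n : ℕ} (hn : n ≠ 0) : allOne n ≠ 0 :=
  fun h => one_ne_zero (congrFun h ⟨0, Nat.pos_of_ne_zero hn⟩)

def permLin {n : ℕ} (σ : Equiv.Perm (Fin n)) : Module.End (ZMod 2) (Vec n) :=
  LinearMap.funLeft (ZMod 2) (ZMod 2) ⇑σ⁻¹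

namespace HFPCode

variable {n : ℕ} (H : HFPCode n)

theorem two_mul_hammingNorm {x : Vec n} (hx : x ∈ H.C) (hx0 : x ≠ 0) (hxu : x ≠ allOne n) :
    2 * hammingNorm x = n := by
  have h0x : (0 : Vec n) ≠ x + allOne n := fun h =>
    hxu (by rw [eq_neg_of_add_eq_zero_left h.symm, ZModModule.neg_eq_self])
  simpa [hammingDist_zero_right] using H.dist_eq x hx 0 H.zero_mem hx0 h0x

theorem four_mul_hammingNorm_mul {x y : Vec n} (hx : x ∈ H.C) (hy : y ∈ H.C)
    (hx0 : x ≠ 0) (hxu : x ≠ allOne n) (hy0 : y ≠ 0) (hyu : y ≠ allOne n)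
    (hxy : x ≠ y) (hyx : y ≠ x + allOne n) :
    4 * hammingNorm (x * y) = n := by
  have hsum := hammingDist_add_two_mul_hammingNorm_mul x y
  have hd := H.dist_eq x hx y hy hxy hyx
  have hwx := H.two_mul_hammingNorm hx hx0 hxu
  have hwy := H.two_mul_hammingNorm hy hy0 hyu
  omega

theorem even_hammingNorm (h4 : 4 ∣ n) {x : Vec n} (hx : x ∈ H.C) : Even (hammingNorm x) := by
  obtain ⟨k, rfl⟩ := h4
  by_cases hx0 : x = 0
  · simp [hx0]
  by_cases hxu : x = allOne (4 * k)
  · rw [hxu, hammingNorm_allOne]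
    exact ⟨2 * k, by ring⟩
  have := H.two_mul_hammingNorm hx hx0 hxu
  exact ⟨k, by omega⟩

theorem dotProduct_self_eq_zero (h4 : 4 ∣ n) {x : Vec n} (hx : x ∈ H.C) : x ⬝ᵥ x = 0 := by
  have hxx : x * x = x := funext fun i => by rw [Pi.mul_apply, ← sq, ZMod.pow_card]
  rw [dotProduct_eq_hammingNorm_mul, hxx, ZMod.natCast_eq_zero_iff_even]
  exact H.even_hammingNorm h4 hx

theorem dotProduct_allOne_eq_zero (h4 : 4 ∣ n) {x : Vec n} (hx : x ∈ H.C) :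
    x ⬝ᵥ allOne n = 0 := by
  rw [dotProduct_eq_hammingNorm_mul, show x * allOne n = x from mul_one x,
    ZMod.natCast_eq_zero_iff_even]
  exact H.even_hammingNorm h4 hx

theorem dotProduct_eq_zero (h8 : 8 ∣ n) {x y : Vec n} (hx : x ∈ H.C) (hy : y ∈ H.C) :
    x ⬝ᵥ y = 0 := by
  have h4 : 4 ∣ n := dvd_trans ⟨2, rfl⟩ h8
  by_cases hx0 : x = 0
  · rw [hx0, zero_dotProduct]
  by_cases hy0 : y = 0
  · rw [hy0, dotProduct_zero]
  by_cases hxu : x = allOne n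
  · rw [hxu, dotProduct_comm]
    exact H.dotProduct_allOne_eq_zero h4 hy
  by_cases hyu : y = allOne n
  · rw [hyu]
    exact H.dotProduct_allOne_eq_zero h4 hx
  by_cases hxy : x = y
  · rw [← hxy]
    exact H.dotProduct_self_eq_zero h4 hx
  by_cases hyx : y = x + allOne n
  · rw [hyx, dotProduct_add, H.dotProduct_self_eq_zero h4 hx,
      H.dotProduct_allOne_eq_zero h4 hx, add_zero]
  have := H.four_mul_hammingNorm_mul hx hy hx0 hxu hy0 hyu hxy hyx
  rw [dotProduct_eq_hammingNorm_mul, ZMod.natCast_eq_zero_iff_even]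
  obtain ⟨k, rfl⟩ := h8
  exact ⟨k, by omega⟩

theorem rankOf_add_one_le (h4 : 4 ∣ n) (hn : n ≠ 0) : rankOf H.C + 1 ≤ n := by
  have := finrank_span_add_finrank_span_le (S := H.C) (T := {allOne n}) fun x hx y hy => by
    rw [Set.mem_singleton_iff.mp hy]
    exact H.dotProduct_allOne_eq_zero h4 hx
  rwa [finrank_span_singleton (allOne_ne_zero hn)] at this

theorem two_mul_rankOf_le (h8 : 8 ∣ n) : 2 * rankOf H.C ≤ n := by
  have := finrank_span_add_finrank_span_le fun x hx y hy => H.dotProduct_eq_zero h8 hx hy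
  rwa [rankOf, two_mul]

theorem pow_eq_sum (x : Vec n) (m : ℕ) :
    H.pow x m = ∑ j ∈ range m, (permLin (H.π x) ^ j) x := by
  induction m with
  | zero => rfl
  | succ m ih =>
    rw [sum_range_succ', pow_zero, Module.End.one_apply]
    simp only [pow_succ', Module.End.mul_apply, ← map_sum, ← ih]
    exact add_comm _ _

theorem permLin_mem_span {a y : Vec n} (ha : a ∈ H.C) (hy : y ∈ Submodule.span (ZMod 2) H.C) :
    permLin (H.π a) y ∈ Submodule.span (ZMod 2) H.C := by
  refine (Submodule.span_le (p := (Submodule.span (ZMod 2) H.C).comap (permLin (H.π a)))).mpr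
    (fun y hy => ?_) hy
  have : permLin (H.π a) y = H.mul a y - a := (add_sub_cancel_left a _).symm
  rw [SetLike.mem_coe, Submodule.mem_comap, this]
  exact sub_mem (Submodule.subset_span (H.mul_mem a ha y hy)) (Submodule.subset_span ha)

theorem two_pow_le_rankOf (hn : n ≠ 0) {a : Vec n} (ha : a ∈ H.C) {m : ℕ}
    (hau : H.pow a (2 ^ m) = allOne n) : 2 ^ m ≤ rankOf H.C := by
  set P := permLin (H.π a)
  set N := P + 1
  have hspan : ∀ k, (N ^ k) a ∈ Submodule.span (ZMod 2) H.C := by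
    intro k
    induction k with
    | zero => exact Submodule.subset_span ha
    | succ k ih =>
      rw [pow_succ', Module.End.mul_apply, LinearMap.add_apply, Module.End.one_apply]
      exact add_mem (H.permLin_mem_span ha ih) ih
  have hNa : (N ^ (2 ^ m - 1)) a = allOne n := by
    have := congrArg (fun p => aeval P p a) (add_one_pow_two_pow_sub_one (X : (ZMod 2)[X]) m)
    rw [← hau, H.pow_eq_sum]
    simpa [N] using this
  have hNu : N (allOne n) = 0 := ZModModule.add_self (allOne n)
  have hli := linearIndependent_pow_apply_of_pow_succ_apply_eq_zero N
    (hNa ▸ allOne_ne_zero hn) (by rw [pow_succ', Module.End.mul_apply, hNa, hNu])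
  calc 2 ^ m = Fintype.card (Fin (2 ^ m - 1 + 1)) := by
        rw [Fintype.card_fin, Nat.sub_add_cancel Nat.one_le_two_pow]
    _ = finrank (ZMod 2) (Submodule.span (ZMod 2) (Set.range _)) := (finrank_span_eq_card hli).symm
    _ ≤ rankOf H.C := Submodule.finrank_mono <| Submodule.span_le.mpr <|
        Set.range_subset_iff.mpr fun k => hspan k

end HFPCode

/-- A nonlinear HFP(4t_u,2)-code of length `4t` with `t` a power of two
has rank `2t`. -/
theorem rank_eq_of_Is4tu2_pow_two (t : ℕ) (H : HFPCode (4 * t)) (a b : Vec (4 * t))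
    (hC : HFPCode.Is4tu2 t H a b)
    (hnl : ¬ IsLinearCode H.C)
    (hpow : ∃ s : ℕ, t = 2 ^ s) :
    rankOf H.C = 2 * t := by
  obtain ⟨ha, -, -, -, -, hau, -⟩ := hC
  obtain ⟨s, rfl⟩ := hpow
  have hlow : 2 ^ (s + 1) ≤ rankOf H.C :=
    H.two_pow_le_rankOf (by positivity) ha (by rwa [pow_succ'])
  rcases s with _ | s
  · have hup := H.rankOf_add_one_le (dvd_mul_right 4 _) (by positivity)
    have hcard := ncard_lt_two_pow_rankOf hnl
    rw [H.card_eq] at hcard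
    have := Nat.pow_le_pow_right two_pos (show rankOf H.C ≤ 3 by omega)
    omega
  · have := H.two_mul_rankOf_le ⟨2 ^ s, by ring⟩
    rw [pow_succ] at hlow
    omega
end
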